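/- arXiv:2201.09899 — 6 statements merged into one kernel-verified Lean document; each statement's English description precedes it below -/
import Mathlib

section
/- Let A and B be real symmetric positive semidefinite n×n matrices. Then every complex root of the characteristic polynomial of the product A·B is a nonnegative real number. -/
/-!
Over `ℂ`, a real positive semidefinite matrix `LᵀL` stays positive semidefinite, so it suffices to
treat an eigenvector `v` of `AB` with eigenvalue `z` for complex positive semidefinite `A`, `B`.
With `u = Bv` one gets `uᴴAu = z · vᴴBv`, where both quadratic forms are nonnegative. If
`vᴴBv > 0` this forces `z ≥ 0`; if `vᴴBv = 0`, then `Bv = 0`, hence `z v = ABv = 0` and `z = 0`.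
-/

open Matrix
open scoped ComplexOrder

namespace Matrix

variable {n : Type*} [Fintype n]

theorem IsSymm.posSemidef_of_dotProduct_mulVec_nonneg {R : Type*} [CommRing R] [PartialOrder R]
    [StarRing R] [TrivialStar R] {A : Matrix n n R} (hA : A.IsSymm)
    (hA' : ∀ x : n → R, 0 ≤ x ⬝ᵥ A *ᵥ x) : A.PosSemidef :=
  .of_dotProduct_mulVec_nonneg (isHermitian_iff_isSymm.mpr hA) (by simpa only [star_trivial])

theorem PosSemidef.map_algebraMap_real {𝕜 : Type*} [RCLike 𝕜] {A : Matrix n n ℝ}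
    (hA : A.PosSemidef) : (A.map (algebraMap ℝ 𝕜)).PosSemidef := by
  classical
  obtain ⟨L, rfl⟩ : ∃ L : Matrix n n ℝ, A = Lᴴ * L := by
    open scoped MatrixOrder in
    exact CStarAlgebra.nonneg_iff_eq_star_mul_self.mp (nonneg_iff_posSemidef.mpr hA)
  rw [Matrix.map_mul, conjTranspose_map _ fun a => (RCLike.conj_ofReal a).symm]
  exact posSemidef_conjTranspose_mul_self _

theorem exists_mulVec_eq_smul_of_isRoot_charpoly {K : Type*} [Field K] [DecidableEq n]
    {M : Matrix n n K} {z : K} (hz : M.charpoly.IsRoot z) : ∃ v ≠ 0, M *ᵥ v = z • v := by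
  rw [← mem_spectrum_iff_isRoot_charpoly, ← spectrum_toLin',
    ← Module.End.hasEigenvalue_iff_mem_spectrum] at hz
  obtain ⟨v, hv⟩ := hz.exists_hasEigenvector
  exact ⟨v, hv.2, by simpa using hv.apply_eq_smul⟩

theorem PosSemidef.nonneg_of_mul_mulVec_eq_smul {𝕜 : Type*} [RCLike 𝕜] {A B : Matrix n n 𝕜}
    (hA : A.PosSemidef) (hB : B.PosSemidef) {v : n → 𝕜} (hv : v ≠ 0) {z : 𝕜}
    (hz : (A * B) *ᵥ v = z • v) : 0 ≤ z := by
  set u := B *ᵥ v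
  have hAu : A *ᵥ u = z • v := by rw [mulVec_mulVec, hz]
  have hu_v : star u ⬝ᵥ v = star v ⬝ᵥ u := by
    rw [star_mulVec, ← dotProduct_mulVec, hB.isHermitian.eq]
  have hquad : star u ⬝ᵥ A *ᵥ u = z * (star v ⬝ᵥ u) := by
    rw [hAu, dotProduct_smul, smul_eq_mul, hu_v]
  have hs := hA.dotProduct_mulVec_nonneg u
  have ht := hB.dotProduct_mulVec_nonneg v
  rcases ht.eq_or_lt with ht0 | ht0
  · have hu0 : u = 0 := (hB.dotProduct_mulVec_zero_iff v).mp ht0.symm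
    have : z • v = 0 := by rw [← hAu, hu0, mulVec_zero]
    exact ((smul_eq_zero.mp this).resolve_right hv).ge
  · rw [hquad] at hs
    calc 0 ≤ z * (star v ⬝ᵥ u) * (star v ⬝ᵥ u)⁻¹ := mul_nonneg hs (inv_nonneg.mpr ht0.le)
      _ = z := mul_inv_cancel_right₀ ht0.ne' z

end Matrix

theorem product_psd_real_nonneg_spectrum {n : ℕ} (A B : Matrix (Fin n) (Fin n) ℝ)
    (hAsymm : A.IsSymm) (hBsymm : B.IsSymm)
    (hApsd : ∀ x : Fin n → ℝ, 0 ≤ x ⬝ᵥ A.mulVec x)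
    (hBpsd : ∀ x : Fin n → ℝ, 0 ≤ x ⬝ᵥ B.mulVec x) :
    ∀ z : ℂ, ((A * B).charpoly.map (algebraMap ℝ ℂ)).IsRoot z →
      z.im = 0 ∧ 0 ≤ z.re := by
  intro z hz
  rw [← charpoly_map, Matrix.map_mul] at hz
  obtain ⟨v, hv, hzv⟩ := exists_mulVec_eq_smul_of_isRoot_charpoly hz
  have hA := (hAsymm.posSemidef_of_dotProduct_mulVec_nonneg hApsd).map_algebraMap_real (𝕜 := ℂ)
  have hB := (hBsymm.posSemidef_of_dotProduct_mulVec_nonneg hBpsd).map_algebraMap_real (𝕜 := ℂ)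
  obtain ⟨hre, him⟩ := Complex.nonneg_iff.mp (hA.nonneg_of_mul_mulVec_eq_smul hB hv hzv)
  exact ⟨him.symm, hre⟩
end

section
/- Let Φ be an n×n left-stochastic matrix and let π ∈ ℝⁿ be a probability vector with strictly positive entries such that every entry of Φπ is strictly positive. Then every complex eigenvalue of the composite matrix Φ̃_B Φ, where Φ̃_B = J_π Φᵀ J_{Φπ}^{-1} is the Bayes reverse, is a nonnegative real number. -/
open Matrix BigOperators

/-- A left-stochastic matrix: nonnegative entries, each column summing to 1. -/
def IsLeftStochastic {n : ℕ} (M : Matrix (Fin n) (Fin n) ℝ) : Prop :=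
  (∀ i j, 0 ≤ M i j) ∧ ∀ j, ∑ i, M i j = 1

/-- A probability vector with strictly positive entries. -/
def IsPosProbVec {n : ℕ} (π : Fin n → ℝ) : Prop :=
  (∀ i, 0 < π i) ∧ ∑ i, π i = 1

/-- The Bayes reverse matrix: (Φ̃_B)_{i,j} = Φ_{j,i} π_i / (Φπ)_j. -/
noncomputable def bayesReverse {n : ℕ} (Φ : Matrix (Fin n) (Fin n) ℝ)
    (π : Fin n → ℝ) : Matrix (Fin n) (Fin n) ℝ :=
  fun i j => Φ j i * π i / Φ.mulVec π j

/-!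
The Bayes reverse factors as `J_π Φᵀ J_{Φπ}⁻¹`, so the composite is `A * B` with
`A = J_π` and `B = Φᵀ J_{Φπ}⁻¹ Φ`, both positive semidefinite. Writing `A = √A √A` and
using that `XY` and `YX` have the same characteristic polynomial, `A * B` has the characteristic
polynomial of the positive semidefinite matrix `√A B √A`, whose roots are its (real,
nonnegative) eigenvalues.
-/

open Polynomial
open scoped MatrixOrder

namespace Matrix

variable {ι : Type*} [Fintype ι] [DecidableEq ι]

theorem IsHermitian.exists_eq_eigenvalue_of_isRoot_charpoly_map {A : Matrix ι ι ℝ}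
    (hA : A.IsHermitian) {z : ℂ} (hz : (A.charpoly.map (algebraMap ℝ ℂ)).IsRoot z) :
    ∃ i, z = hA.eigenvalues i := by
  simpa [hA.charpoly_eq, Polynomial.map_prod, eval_prod, Finset.prod_eq_zero_iff, sub_eq_zero]
    using hz

theorem PosSemidef.im_eq_zero_and_re_nonneg_of_isRoot_charpoly_map {A : Matrix ι ι ℝ}
    (hA : A.PosSemidef) {z : ℂ} (hz : (A.charpoly.map (algebraMap ℝ ℂ)).IsRoot z) :
    z.im = 0 ∧ 0 ≤ z.re := by
  obtain ⟨i, rfl⟩ := hA.isHermitian.exists_eq_eigenvalue_of_isRoot_charpoly_map hz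
  exact ⟨Complex.ofReal_im _, hA.eigenvalues_nonneg i⟩

theorem PosSemidef.charpoly_mul_eq_charpoly_sqrt_mul_mul_sqrt {A : Matrix ι ι ℝ}
    (hA : A.PosSemidef) (B : Matrix ι ι ℝ) :
    (A * B).charpoly = (CFC.sqrt A * B * CFC.sqrt A).charpoly := by
  conv_lhs => rw [← CFC.sqrt_mul_sqrt_self A hA.nonneg, Matrix.mul_assoc]
  exact charpoly_mul_comm _ _

theorem PosSemidef.im_eq_zero_and_re_nonneg_of_isRoot_charpoly_mul_map {A B : Matrix ι ι ℝ}
    (hA : A.PosSemidef) (hB : B.PosSemidef) {z : ℂ}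
    (hz : ((A * B).charpoly.map (algebraMap ℝ ℂ)).IsRoot z) :
    z.im = 0 ∧ 0 ≤ z.re := by
  rw [hA.charpoly_mul_eq_charpoly_sqrt_mul_mul_sqrt] at hz
  have hsqrt : (CFC.sqrt A)ᴴ = CFC.sqrt A := (CFC.sqrt_nonneg A).posSemidef.isHermitian
  refine PosSemidef.im_eq_zero_and_re_nonneg_of_isRoot_charpoly_map ?_ hz
  simpa only [hsqrt] using hB.conjTranspose_mul_mul_same (CFC.sqrt A)

end Matrix

theorem bayesReverse_eq_diagonal_mul_transpose_mul_diagonal {n : ℕ}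
    (Φ : Matrix (Fin n) (Fin n) ℝ) (π : Fin n → ℝ) :
    bayesReverse Φ π = diagonal π * Φᵀ * diagonal (Φ *ᵥ π)⁻¹ := by
  ext i j
  simp [bayesReverse, div_eq_mul_inv, mul_comm]

theorem bayes_composite_nonneg_spectrum_general {n : ℕ} (Φ : Matrix (Fin n) (Fin n) ℝ)
    (π : Fin n → ℝ) (hπ : IsPosProbVec π)
    (hΦπ : ∀ j, 0 < Φ.mulVec π j) :
    ∀ z : ℂ, ((bayesReverse Φ π * Φ).charpoly.map (algebraMap ℝ ℂ)).IsRoot z →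
      z.im = 0 ∧ 0 ≤ z.re := by
  intro z hz
  have hprior : (diagonal π).PosSemidef := .diagonal fun i => (hπ.1 i).le
  have hmarginal : (diagonal (Φ *ᵥ π)⁻¹).PosSemidef :=
    .diagonal fun j => (inv_pos.2 (hΦπ j)).le
  have hgram : (Φᵀ * diagonal (Φ *ᵥ π)⁻¹ * Φ).PosSemidef := by
    simpa only [conjTranspose_eq_transpose_of_trivial] using
      hmarginal.conjTranspose_mul_mul_same Φ
  rw [bayesReverse_eq_diagonal_mul_transpose_mul_diagonal, Matrix.mul_assoc (diagonal π),
    Matrix.mul_assoc (diagonal π)] at hz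
  exact hprior.im_eq_zero_and_re_nonneg_of_isRoot_charpoly_mul_map hgram hz

theorem bayes_composite_nonneg_spectrum {n : ℕ} (Φ : Matrix (Fin n) (Fin n) ℝ)
    (π : Fin n → ℝ) (hΦ : IsLeftStochastic Φ) (hπ : IsPosProbVec π)
    (hΦπ : ∀ j, 0 < Φ.mulVec π j) :
    ∀ z : ℂ, ((bayesReverse Φ π * Φ).charpoly.map (algebraMap ℝ ℂ)).IsRoot z →
      z.im = 0 ∧ 0 ≤ z.re :=
  bayes_composite_nonneg_spectrum_general Φ π hπ hΦπ
end

section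
/- Let Φ be an n×n left-stochastic matrix and π ∈ ℝⁿ a probability vector with strictly positive entries such that Φ satisfies detailed balance with respect to π (Φ J_π = J_π Φᵀ) and every complex eigenvalue of Φ is a nonnegative real number. Then: (i) Φπ = π, so the identity matrix I satisfies I(Φπ) = π, the composite I·Φ satisfies detailed balance with respect to π, and all eigenvalues of I·Φ are nonnegative; and (ii) for every n×n left-stochastic matrix Φ̃ one has det(Φ̃ Φ) ≤ det(Φ) = det(I·Φ). In other words, the identity map achieves the maximal determinant of the forth-and-back evolution among all stochastic retrieval maps. -/
open Matrix BigOperators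

lemma prod_roots_nonneg (s : Multiset ℂ) (h : ∀ z ∈ s, z.im = 0 ∧ 0 ≤ z.re) :
    s.prod.im = 0 ∧ 0 ≤ s.prod.re := by
  induction s using Multiset.induction with
  | empty => simp
  | cons a s ih =>
    have ha := h a (Multiset.mem_cons_self a s)
    have hs := ih (fun z hz => h z (Multiset.mem_cons_of_mem hz))
    rw [Multiset.prod_cons]
    constructor
    · rw [Complex.mul_im, ha.1, hs.1]; ring
    · rw [Complex.mul_re, ha.1, hs.1]
      simpa using mul_nonneg ha.2 hs.2

lemma det_nonneg_of_spec {n : ℕ} (Φ : Matrix (Fin n) (Fin n) ℝ)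
    (hspec : ∀ z : ℂ, (Φ.charpoly.map (algebraMap ℝ ℂ)).IsRoot z →
      z.im = 0 ∧ 0 ≤ z.re) : 0 ≤ Φ.det := by
  have hmap : (Φ.map (algebraMap ℝ ℂ)).charpoly = Φ.charpoly.map (algebraMap ℝ ℂ) :=
    Matrix.charpoly_map Φ (algebraMap ℝ ℂ)
  have hdet : (algebraMap ℝ ℂ) Φ.det
      = ((Φ.charpoly.map (algebraMap ℝ ℂ)).roots).prod := by
    rw [RingHom.map_det, RingHom.mapMatrix_apply, Matrix.det_eq_prod_roots_charpoly, hmap]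
  have h := prod_roots_nonneg ((Φ.charpoly.map (algebraMap ℝ ℂ)).roots) ?_
  · have : ((Φ.det : ℂ)).re = Φ.det := Complex.ofReal_re _
    rw [show ((Φ.det : ℂ)) = _ from hdet] at this
    rw [← this]; exact h.2
  · intro z hz
    exact hspec z (Polynomial.isRoot_of_mem_roots hz)

lemma det_le_one_of_leftStochastic {n : ℕ} (M : Matrix (Fin n) (Fin n) ℝ)
    (hM : IsLeftStochastic M) : M.det ≤ 1 := by
  have h1 : M.det ≤ ∑ σ : Equiv.Perm (Fin n), ∏ i, M (σ i) i := by
    rw [Matrix.det_apply]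
    apply Finset.sum_le_sum
    intro σ _
    have hp : 0 ≤ ∏ i, M (σ i) i := Finset.prod_nonneg fun i _ => hM.1 _ _
    rcases Int.units_eq_one_or (Equiv.Perm.sign σ) with h | h <;> simp [h] <;> linarith
  have h2 : ∑ σ : Equiv.Perm (Fin n), ∏ i, M (σ i) i
      ≤ ∑ f : Fin n → Fin n, ∏ i, M (f i) i := by
    have himg : ∑ f ∈ Finset.univ.image (fun σ : Equiv.Perm (Fin n) => (σ : Fin n → Fin n)),
            ∏ i, M (f i) i
        = ∑ σ : Equiv.Perm (Fin n), ∏ i, M ((σ : Fin n → Fin n) i) i :=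
      Finset.sum_image (fun σ _ τ _ h => by exact Equiv.coe_fn_injective h)
    rw [← himg]
    apply Finset.sum_le_sum_of_subset_of_nonneg (Finset.subset_univ _)
    intro f _ _
    exact Finset.prod_nonneg fun i _ => hM.1 _ _
  have h3 : ∑ f : Fin n → Fin n, ∏ i, M (f i) i = 1 := by
    rw [show (Finset.univ : Finset (Fin n → Fin n))
        = Fintype.piFinset (fun _ => Finset.univ) from (Fintype.piFinset_univ).symm,
      ← Finset.prod_univ_sum (f := fun (i j : Fin n) => M j i)]
    simp [hM.2]
  linarith

theorem identity_is_optimal_retrieval {n : ℕ} (Φ : Matrix (Fin n) (Fin n) ℝ)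
    (π : Fin n → ℝ) (hΦ : IsLeftStochastic Φ) (hπ : IsPosProbVec π)
    (hdb : Φ * Matrix.diagonal π = Matrix.diagonal π * Φᵀ)
    (hspec : ∀ z : ℂ, (Φ.charpoly.map (algebraMap ℝ ℂ)).IsRoot z →
      z.im = 0 ∧ 0 ≤ z.re) :
    Φ.mulVec π = π ∧
    (1 : Matrix (Fin n) (Fin n) ℝ).mulVec (Φ.mulVec π) = π ∧
    ((1 : Matrix (Fin n) (Fin n) ℝ) * Φ) * Matrix.diagonal π
      = Matrix.diagonal π * ((1 : Matrix (Fin n) (Fin n) ℝ) * Φ)ᵀ ∧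
    (∀ z : ℂ, (((1 : Matrix (Fin n) (Fin n) ℝ) * Φ).charpoly.map (algebraMap ℝ ℂ)).IsRoot z →
      z.im = 0 ∧ 0 ≤ z.re) ∧
    Φ.det = ((1 : Matrix (Fin n) (Fin n) ℝ) * Φ).det ∧
    ∀ Φtilde : Matrix (Fin n) (Fin n) ℝ, IsLeftStochastic Φtilde →
      (Φtilde * Φ).det ≤ ((1 : Matrix (Fin n) (Fin n) ℝ) * Φ).det := by
  have hdb' : ∀ i j, Φ i j * π j = π i * Φ j i := by
    intro i j
    have := congrFun (congrFun hdb i) j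
    simpa [Matrix.mul_diagonal, Matrix.diagonal_mul, Matrix.transpose_apply] using this
  have hfix : Φ.mulVec π = π := by
    funext i
    simp only [Matrix.mulVec, dotProduct]
    calc ∑ j, Φ i j * π j = ∑ j, π i * Φ j i := Finset.sum_congr rfl fun j _ => hdb' i j
      _ = π i * ∑ j, Φ j i := by rw [Finset.mul_sum]
      _ = π i := by rw [hΦ.2 i, mul_one]
  refine ⟨hfix, by rw [Matrix.one_mulVec, hfix], by rw [one_mul, hdb], ?_, by rw [one_mul], ?_⟩
  · rw [one_mul]; exact hspec
  · intro Φt hΦt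
    rw [one_mul, Matrix.det_mul]
    exact mul_le_of_le_one_left (det_nonneg_of_spec Φ hspec) (det_le_one_of_leftStochastic Φt hΦt)
end

section
/- Let S be an n×n left-stochastic matrix that is invertible and whose inverse S⁻¹ is also left-stochastic. Then S is a permutation matrix, i.e. there exists a permutation τ of {1,…,n} such that S_{i,j} = 1 if i = τ(j) and S_{i,j} = 0 otherwise. -/
open Matrix BigOperators

theorem invertible_stochastic_with_stochastic_inverse_is_permutation {n : ℕ}
    (S : Matrix (Fin n) (Fin n) ℝ) (hS : IsLeftStochastic S)
    (hinv : IsUnit S) (hSinv : IsLeftStochastic S⁻¹) :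
    ∃ τ : Equiv.Perm (Fin n), ∀ i j, S i j = if i = τ j then 1 else 0 := by
  set T := S⁻¹ with hT
  have hdet : IsUnit S.det := (Matrix.isUnit_iff_isUnit_det S).mp hinv
  have hST : S * T = 1 := Matrix.mul_nonsing_inv S hdet
  -- each column of T has a positive entry
  have hpos : ∀ j : Fin n, ∃ k, 0 < T k j := by
    intro j
    by_contra h
    push_neg at h
    have : ∑ k, T k j ≤ 0 := Finset.sum_nonpos (fun k _ => h k)
    rw [hSinv.2 j] at this
    linarith
  choose σ hσ using hpos
  -- off-diagonal products vanish
  have hzero : ∀ i j, i ≠ j → ∀ k, S i k * T k j = 0 := by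
    intro i j hij k
    have hsum : ∑ k, S i k * T k j = 0 := by
      have := congrFun (congrFun hST i) j
      simp [Matrix.mul_apply, Matrix.one_apply, hij] at this
      exact this
    have hnn : ∀ k ∈ Finset.univ, 0 ≤ S i k * T k j :=
      fun k _ => mul_nonneg (hS.1 i k) (hSinv.1 k j)
    exact (Finset.sum_eq_zero_iff_of_nonneg hnn).mp hsum k (Finset.mem_univ k)
  have hScol0 : ∀ i j, i ≠ j → S i (σ j) = 0 := by
    intro i j hij
    have := hzero i j hij (σ j)
    have hTpos := hσ j
    nlinarith [this, hTpos]
  have hScol1 : ∀ j, S j (σ j) = 1 := by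
    intro j
    have hsum := hS.2 (σ j)
    have : ∑ i, S i (σ j) = S j (σ j) := by
      apply Finset.sum_eq_single
      · intro i _ hi; exact hScol0 i j hi
      · intro h; exact absurd (Finset.mem_univ j) h
    rw [this] at hsum
    exact hsum
  have hinj : Function.Injective σ := by
    intro j j' h
    by_contra hne
    have h1 : S j (σ j) = 1 := hScol1 j
    have h0 : S j (σ j') = 0 := hScol0 j j' hne
    rw [h] at h1
    rw [h1] at h0
    norm_num at h0
  have hbij : Function.Bijective σ := Finite.injective_iff_bijective.mp hinj
  let e : Equiv.Perm (Fin n) := Equiv.ofBijective σ hbij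
  refine ⟨e.symm, fun i j => ?_⟩
  have hj : σ (e.symm j) = j := e.apply_symm_apply j
  by_cases hij : i = e.symm j
  · subst hij
    rw [if_pos rfl]
    have h := hScol1 (e.symm j)
    rwa [hj] at h
  · rw [if_neg hij]
    have h := hScol0 i (e.symm j) hij
    rwa [hj] at h
end

section
/- Let R be an n×n left-stochastic matrix satisfying R·R = I (i.e. R is involutive). Then R is a symmetric permutation matrix: there exists a permutation τ of {1,…,n} with τ² = id (all cycles of τ have length at most 2) such that R is the permutation matrix of τ; in particular Rᵀ = R. -/
open Matrix BigOperators

theorem involutive_stochastic_is_symmetric_permutation {n : ℕ}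
    (R : Matrix (Fin n) (Fin n) ℝ) (hR : IsLeftStochastic R)
    (hRR : R * R = 1) :
    ∃ τ : Equiv.Perm (Fin n), (∀ x, τ (τ x) = x) ∧
      (∀ i j, R i j = if i = τ j then 1 else 0) ∧ Rᵀ = R := by
  obtain ⟨hpos, hsum⟩ := hR
  have hle1 : ∀ i j, R i j ≤ 1 := by
    intro i j
    calc R i j ≤ ∑ m, R m j :=
          Finset.single_le_sum (fun m _ => hpos m j) (Finset.mem_univ i)
      _ = 1 := hsum j
  have hdiag : ∀ j, ∑ m, R j m * R m j = 1 := by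
    intro j
    have := congrFun (congrFun hRR j) j
    simpa [Matrix.mul_apply, Matrix.one_apply] using this
  have hA : ∀ j k, 0 < R k j → R j k = 1 := by
    intro j k hk
    have hterm : ∀ m ∈ Finset.univ, (0:ℝ) ≤ R m j - R j m * R m j := by
      intro m _
      nlinarith [hpos m j, hpos j m, hle1 j m]
    have hsum0 : ∑ m, (R m j - R j m * R m j) = 0 := by
      rw [Finset.sum_sub_distrib, hsum j, hdiag j]; ring
    have h0 := (Finset.sum_eq_zero_iff_of_nonneg hterm).mp hsum0 k (Finset.mem_univ k)
    nlinarith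
  have hB : ∀ j k, R j k = 1 → ∀ m, m ≠ j → R m k = 0 := by
    intro j k h1 m hm
    have hsplit : ∑ i ∈ Finset.univ.erase j, R i k = 0 := by
      have h2 := Finset.add_sum_erase Finset.univ (fun i => R i k) (Finset.mem_univ j)
      have h3 := hsum k
      rw [h3] at h2
      rw [h1] at h2
      linarith
    have := (Finset.sum_eq_zero_iff_of_nonneg
      (fun i _ => hpos i k)).mp hsplit m (Finset.mem_erase.mpr ⟨hm, Finset.mem_univ m⟩)
    exact this
  have key : ∀ j, ∃ k, ∀ i, R i j = if i = k then 1 else 0 := by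
    intro j
    have hex : ∃ k, 0 < R k j := by
      by_contra h
      push_neg at h
      have hz : ∀ k, R k j = 0 := fun k => le_antisymm (h k) (hpos k j)
      have := hsum j
      simp [hz] at this
    obtain ⟨k, hk⟩ := hex
    have h1 : R j k = 1 := hA j k hk
    have hcolk : ∀ m, m ≠ j → R m k = 0 := hB j k h1
    have hkk : R k j = 1 := by
      have hd := congrFun (congrFun hRR k) k
      simp only [Matrix.mul_apply, Matrix.one_apply_eq] at hd
      have hs : ∑ m, R k m * R m k = R k j * R j k := by
        refine Finset.sum_eq_single j (fun m _ hm => ?_) (fun h => absurd (Finset.mem_univ j) h)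
        rw [hcolk m hm, mul_zero]
      rw [hs, h1, mul_one] at hd
      exact hd
    have hcolj := hB k j hkk
    refine ⟨k, fun i => ?_⟩
    by_cases h : i = k
    · simp [h, hkk]
    · simp [h, hcolj i h]
  choose σ hσ using key
  have hσσ : ∀ j, σ (σ j) = j := by
    intro j
    have h1 : R (σ j) j = 1 := by simpa using hσ j (σ j)
    have h2 : R j (σ j) = 1 := hA j (σ j) (by rw [h1]; norm_num)
    have h3 := hσ (σ j) j
    rw [h2] at h3
    by_contra h
    rw [if_neg (fun hh => h hh.symm)] at h3
    norm_num at h3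
  refine ⟨⟨σ, σ, hσσ, hσσ⟩, hσσ, fun i j => hσ j i, ?_⟩
  ext i j
  show R j i = R i j
  rw [hσ i j, hσ j i]
  by_cases h : j = σ i
  · rw [if_pos h, if_pos (by rw [h, hσσ])]
  · rw [if_neg h, if_neg (fun hi => h (by rw [hi, hσσ]))]
end

section
/- Let π be a d×d positive definite complex Hermitian matrix, let J_π be the superoperator J_π(ρ) = π^{1/2} ρ π^{1/2}, and let M and N be linear maps on d×d complex matrices such that Tr((M X)ᴴ Y) = Tr(Xᴴ (N Y)) for all X, Y (N is the Hilbert–Schmidt adjoint of M). If M ∘ J_π = J_π ∘ N, then M is self-adjoint with respect to the inner product induced by J_π^{-1}: for every Hermitian matrix A and every matrix B, Tr( Aᴴ · J_π^{-1}( M(B) ) ) = Tr( (M(A))ᴴ · J_π^{-1}( B ) ), where J_π^{-1}(ρ) = π^{-1/2} ρ π^{-1/2}. -/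
/-!
With `s = π^{1/2}`, detailed balance `M (s ρ s) = s (N ρ) s` inverts to
`N (s⁻¹ A s⁻¹) = s⁻¹ (M A) s⁻¹`. Since `s⁻¹` is Hermitian, the congruence `X ↦ s⁻¹ X s⁻¹` is
self-adjoint for the Hilbert–Schmidt pairing `⟪X, Y⟫ = Tr (Xᴴ Y)`, so
`⟪A, s⁻¹ (M B) s⁻¹⟫ = ⟪s⁻¹ A s⁻¹, M B⟫ = ⟪N (s⁻¹ A s⁻¹), B⟫ = ⟪s⁻¹ (M A) s⁻¹, B⟫
  = ⟪M A, s⁻¹ B s⁻¹⟫`.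
-/

open Matrix ComplexOrder

/-- The positive semidefinite square root of a positive semidefinite matrix
(the definition removed from Mathlib, restored with its old meaning). -/
noncomputable def Matrix.PosSemidef.sqrt {n : Type*} [Fintype n] [DecidableEq n] {𝕜 : Type*}
    [RCLike 𝕜] {A : Matrix n n 𝕜} (hA : A.PosSemidef) : Matrix n n 𝕜 :=
  hA.1.eigenvectorUnitary.1 * diagonal ((↑) ∘ (√·) ∘ hA.1.eigenvalues) *
    (star hA.1.eigenvectorUnitary : Matrix n n 𝕜)

namespace Matrix

variable {n : Type*} [Fintype n]

section Sqrt

variable [DecidableEq n] {𝕜 : Type*} [RCLike 𝕜] {A : Matrix n n 𝕜}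

theorem PosSemidef.isHermitian_sqrt (hA : A.PosSemidef) : hA.sqrt.IsHermitian := by
  rw [PosSemidef.sqrt, star_eq_conjTranspose]
  refine isHermitian_mul_mul_conjTranspose _ (isHermitian_diagonal_of_self_adjoint _ ?_)
  ext i
  simp

theorem PosSemidef.sqrt_mul_self (hA : A.PosSemidef) : hA.sqrt * hA.sqrt = A := by
  set U : Matrix n n 𝕜 := hA.1.eigenvectorUnitary.1
  set D : Matrix n n 𝕜 := diagonal ((↑) ∘ (√·) ∘ hA.1.eigenvalues)
  have hU : star U * U = 1 := Unitary.coe_star_mul_self _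
  have hD : D * D = diagonal ((↑) ∘ hA.1.eigenvalues) := by
    rw [diagonal_mul_diagonal]
    congr 1
    funext i
    simp only [Function.comp_apply, ← RCLike.ofReal_mul,
      Real.mul_self_sqrt (hA.eigenvalues_nonneg i)]
  calc hA.sqrt * hA.sqrt = U * (D * (star U * U) * D) * star U := by
        simp only [PosSemidef.sqrt, U, D, Matrix.mul_assoc]
    _ = A := by
        rw [hU, Matrix.mul_one, hD]
        conv_rhs => rw [hA.1.spectral_theorem, Unitary.conjStarAlgAut_apply]

theorem PosDef.isUnit_sqrt (hA : A.PosDef) : IsUnit hA.posSemidef.sqrt :=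
  isUnit_of_mul_isUnit_left (hA.posSemidef.sqrt_mul_self ▸ hA.isUnit)

end Sqrt

variable {R : Type*} [CommRing R]

theorem inv_sandwich_apply_of_intertwine [DecidableEq n] {M N : Matrix n n R → Matrix n n R}
    {S : Matrix n n R} (hS : IsUnit S) (h : ∀ ρ, M (S * ρ * S) = S * N ρ * S) (A : Matrix n n R) :
    N (S⁻¹ * A * S⁻¹) = S⁻¹ * M A * S⁻¹ := by
  have hdet : IsUnit S.det := (isUnit_iff_isUnit_det S).mp hS
  calc N (S⁻¹ * A * S⁻¹) = S⁻¹ * (S * N (S⁻¹ * A * S⁻¹) * S) * S⁻¹ := by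
        simp only [Matrix.mul_assoc, mul_nonsing_inv _ hdet, Matrix.mul_one,
          nonsing_inv_mul_cancel_left S _ hdet]
    _ = S⁻¹ * M A * S⁻¹ := by
        rw [← h]
        simp only [Matrix.mul_assoc, nonsing_inv_mul _ hdet, Matrix.mul_one,
          mul_nonsing_inv_cancel_left S _ hdet]

variable [StarRing R]

theorem trace_conjTranspose_mul_eq_star_trace (X Y : Matrix n n R) :
    (Xᴴ * Y).trace = star (Yᴴ * X).trace := by
  rw [← trace_conjTranspose, conjTranspose_mul, conjTranspose_conjTranspose]

theorem IsHermitian.trace_conjTranspose_mul_sandwich {S : Matrix n n R} (hS : S.IsHermitian)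
    (X Y : Matrix n n R) : (Xᴴ * (S * Y * S)).trace = ((S * X * S)ᴴ * Y).trace := by
  rw [conjTranspose_mul, conjTranspose_mul, hS.eq, ← Matrix.mul_assoc, ← Matrix.mul_assoc,
    trace_mul_cycle]

theorem trace_conjTranspose_mul_apply_eq_of_adjoint {M N : Matrix n n R → Matrix n n R}
    (hadj : ∀ X Y, ((M X)ᴴ * Y).trace = (Xᴴ * N Y).trace) (X Y : Matrix n n R) :
    (Xᴴ * M Y).trace = ((N X)ᴴ * Y).trace := by
  rw [trace_conjTranspose_mul_eq_star_trace, hadj, ← trace_conjTranspose_mul_eq_star_trace]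

end Matrix

theorem quantum_detailed_balance_self_adjoint {d : ℕ}
    (π : Matrix (Fin d) (Fin d) ℂ) (hπ : π.PosDef)
    (M N : Matrix (Fin d) (Fin d) ℂ →ₗ[ℂ] Matrix (Fin d) (Fin d) ℂ)
    (hadj : ∀ X Y : Matrix (Fin d) (Fin d) ℂ,
      ((M X)ᴴ * Y).trace = (Xᴴ * N Y).trace)
    (hdb : ∀ ρ : Matrix (Fin d) (Fin d) ℂ,
      M (hπ.posSemidef.sqrt * ρ * hπ.posSemidef.sqrt)
        = hπ.posSemidef.sqrt * N ρ * hπ.posSemidef.sqrt) :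
    ∀ A B : Matrix (Fin d) (Fin d) ℂ, A.IsHermitian →
      (Aᴴ * ((hπ.posSemidef.sqrt)⁻¹ * M B * (hπ.posSemidef.sqrt)⁻¹)).trace
        = ((M A)ᴴ * ((hπ.posSemidef.sqrt)⁻¹ * B * (hπ.posSemidef.sqrt)⁻¹)).trace := by
  intro A B _
  set s := hπ.posSemidef.sqrt
  have hs_inv : s⁻¹.IsHermitian := hπ.posSemidef.isHermitian_sqrt.inv
  calc (Aᴴ * (s⁻¹ * M B * s⁻¹)).trace = ((s⁻¹ * A * s⁻¹)ᴴ * M B).trace :=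
        hs_inv.trace_conjTranspose_mul_sandwich _ _
    _ = ((N (s⁻¹ * A * s⁻¹))ᴴ * B).trace := trace_conjTranspose_mul_apply_eq_of_adjoint hadj _ _
    _ = ((s⁻¹ * M A * s⁻¹)ᴴ * B).trace := by
        rw [inv_sandwich_apply_of_intertwine hπ.isUnit_sqrt hdb]
    _ = ((M A)ᴴ * (s⁻¹ * B * s⁻¹)).trace := (hs_inv.trace_conjTranspose_mul_sandwich _ _).symm
end
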